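/- (Lemma 5, first estimate, concrete form) Suppose all partial derivatives D^{(α,β)}κ = ∂^{α+β}κ/∂s^α∂t^β with 0 ≤ α+β ≤ 2r+3 exist, are continuous on [0,1]×[0,1], and satisfy |D^{(α,β)}κ(s,t)| ≤ C₂. Then there exists a constant C > 0, independent of n, such that for every continuous ψ : [0,1] → ℝ, writing x := Kψ and z := K(x − Q_n x), one has ‖z − Q_n z‖_∞ ≤ C ‖ψ‖_∞ h^{4r+3}. -/

import Mathlib

open Set MeasureTheory

/-- Equidistant interpolation nodes: `τ_j^i = t_{j-1} + i·h/(2r)` with `h = 1/n`. -/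
noncomputable def tau (n r j i : ℕ) : ℝ :=
  ((j : ℝ) - 1) / n + (i : ℝ) / (2 * r * n)

/-- The unique polynomial of degree ≤ 2r interpolating `x` at the nodes of `Δ_j`. -/
noncomputable def interpPoly (n r j : ℕ) (x : ℝ → ℝ) : Polynomial ℝ :=
  Lagrange.interpolate (Finset.range (2 * r + 1)) (tau n r j) (fun i => x (tau n r j i))

/-- The interpolatory projection `Q_n x`: on each subinterval `Δ_j = [(j-1)/n, j/n]` it
coincides with the polynomial of degree ≤ 2r interpolating `x` at the nodes `τ_j^i`.
(At a partition point both adjacent pieces take the value `x(t_j)`.) -/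
noncomputable def Qn (n r : ℕ) (x : ℝ → ℝ) (t : ℝ) : ℝ :=
  (interpPoly n r (min n (⌊t * (n : ℝ)⌋₊ + 1)) x).eval t

/-- The Fredholm integral operator with kernel `κ`. -/
noncomputable def Kop (κ : ℝ → ℝ → ℝ) (x : ℝ → ℝ) (s : ℝ) : ℝ :=
  ∫ t in (0:ℝ)..1, κ s t * x t

/-- Supremum norm on `[0,1]`. -/
noncomputable def supNorm (f : ℝ → ℝ) : ℝ :=
  ⨆ t : Set.Icc (0:ℝ) 1, |f t.1|

/-- The nodal polynomial `Φ_j(t) = ∏_{i=0}^{2r} (t − τ_j^i)`. -/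
noncomputable def Phi (n r j : ℕ) (t : ℝ) : ℝ :=
  ∏ i ∈ Finset.range (2 * r + 1), (t - tau n r j i)

/-- `‖x‖_{k,∞} = max_{0 ≤ i ≤ k} ‖x^{(i)}‖_∞` (derivatives taken within `[0,1]`). -/
noncomputable def cknorm (k : ℕ) (x : ℝ → ℝ) : ℝ :=
  ⨆ i : Fin (k + 1), supNorm (iteratedDerivWithin i x (Set.Icc 0 1))

/-!
`x = Kψ` and `z = K(x - Q_n x)` inherit the smoothness of the kernel (differentiate under the
integral sign), so the interpolation error estimate gives
`‖z - Q_n z‖ ≤ ‖z⁽²ʳ⁺¹⁾‖ h^(2r+1) / (2r+1)!`, and it remains to show `‖z⁽²ʳ⁺¹⁾‖ = O(h^(2r+2))`.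
Now `z⁽²ʳ⁺¹⁾(s) = ∫ ∂ₛ^(2r+1) κ(s, t) (x - Q_n x)(t) dt`, and on each `Δ_j` the interpolation error
is `ω_j(t) · x[τ_j, t]`, where the nodal polynomial `ω_j` is odd about the midpoint of `Δ_j`
(the `2r + 1` nodes are symmetric), so `∫_{Δ_j} ω_j = 0`.
Subtracting `c_j ω_j`, where `c_j` is the value of the weighted divided difference
`t ↦ ∂ₛ^(2r+1) κ(s, t) x[τ_j, t]` at one point of `Δ_j`, leaves an integrand of size
`h^(2r+1) · h`, because that weighted divided difference is Lipschitz. Summing over the `n`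
subintervals gives `O(h^(2r+2))`.
-/

open Polynomial Lagrange

def HasDerivChain (F : ℕ → ℝ → ℝ) (k : ℕ) (a b : ℝ) : Prop :=
  ∀ i < k, ContinuousOn (F i) (Icc a b) ∧ ∀ x ∈ Ioo a b, HasDerivAt (F i) (F (i + 1) x) x

namespace HasDerivChain

variable {F : ℕ → ℝ → ℝ} {k : ℕ} {a b : ℝ}

lemma continuousOn (hF : HasDerivChain F k a b) {i : ℕ} (hi : i < k) :
    ContinuousOn (F i) (Icc a b) :=
  (hF i hi).1

lemma hasDerivAt (hF : HasDerivChain F k a b) {i : ℕ} (hi : i < k) {x : ℝ} (hx : x ∈ Ioo a b) :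
    HasDerivAt (F i) (F (i + 1) x) x :=
  (hF i hi).2 x hx

lemma mono (hF : HasDerivChain F k a b) {j : ℕ} (hj : j ≤ k) {c d : ℝ}
    (hcd : Icc c d ⊆ Icc a b) : HasDerivChain F j c d := by
  refine fun i hi =>
    ⟨(hF.continuousOn (by omega)).mono hcd, fun x hx => hF.hasDerivAt (by omega) ?_⟩
  have hc := (hcd ⟨le_rfl, hx.1.le.trans hx.2.le⟩).1
  have hd := (hcd ⟨hx.1.le.trans hx.2.le, le_rfl⟩).2
  exact ⟨hc.trans_lt hx.1, hx.2.trans_le hd⟩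

lemma tail (hF : HasDerivChain F (k + 1) a b) : HasDerivChain (fun i => F (i + 1)) k a b :=
  fun i hi => hF (i + 1) (by omega)

lemma sub_iterate_derivative (hF : HasDerivChain F k a b) (q : ℝ[X]) :
    HasDerivChain (fun i u => F i u - (derivative^[i] q).eval u) k a b := by
  refine fun i hi => ⟨(hF.continuousOn hi).sub (Polynomial.continuousOn _), fun x hx => ?_⟩
  simpa only [Function.iterate_succ_apply'] using
    (hF.hasDerivAt hi hx).fun_sub ((derivative^[i] q).hasDerivAt x)

/-- Iterated Rolle theorem. -/
lemma exists_eq_zero_of_strictMono (hF : HasDerivChain F k a b) {z : Fin (k + 1) → ℝ}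
    (hz : StrictMono z) (hzI : ∀ i, z i ∈ Icc a b) (h0 : ∀ i, F 0 (z i) = 0) :
    ∃ ξ ∈ Icc a b, F k ξ = 0 := by
  induction k generalizing F with
  | zero => exact ⟨z 0, hzI 0, h0 0⟩
  | succ k ih =>
    have hrolle : ∀ i : Fin (k + 1), ∃ c ∈ Ioo (z i.castSucc) (z i.succ), F 1 c = 0 := by
      intro i
      have hsub : Icc (z i.castSucc) (z i.succ) ⊆ Icc a b :=
        Icc_subset_Icc (hzI _).1 (hzI _).2
      exact exists_hasDerivAt_eq_zero (hz Fin.castSucc_lt_succ)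
        ((hF.continuousOn k.succ_pos).mono hsub) ((h0 _).trans (h0 _).symm) fun x hx =>
          hF.hasDerivAt k.succ_pos ⟨(hzI _).1.trans_lt hx.1, hx.2.trans_le (hzI _).2⟩
    choose c hc hc0 using hrolle
    have hcmono : StrictMono c := fun i j hij =>
      calc c i < z i.succ := (hc i).2
        _ ≤ z j.castSucc := hz.monotone (Fin.succ_le_castSucc_iff.2 hij)
        _ < c j := (hc j).1
    exact ih hF.tail hcmono
      (fun i => ⟨(hzI _).1.trans (hc i).1.le, (hc i).2.le.trans (hzI _).2⟩) hc0

lemma exists_eq_zero (hF : HasDerivChain F k a b) {S : Finset ℝ} (hS : ↑S ⊆ Icc a b)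
    (hcard : S.card = k + 1) (h0 : ∀ x ∈ S, F 0 x = 0) : ∃ ξ ∈ Icc a b, F k ξ = 0 :=
  hF.exists_eq_zero_of_strictMono (S.orderIsoOfFin hcard).strictMono
    (fun i => hS (S.orderIsoOfFin hcard i).2) fun i => h0 _ (S.orderIsoOfFin hcard i).2

end HasDerivChain

lemma Polynomial.iterate_derivative_eq_C_of_natDegree_le {R : Type*} [CommSemiring R] {p : R[X]}
    {k : ℕ} (hp : p.natDegree ≤ k) : derivative^[k] p = C ((k.factorial : R) * p.coeff k) := by
  rw [eq_C_of_natDegree_eq_zero (p := derivative^[k] p)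
      (by have := natDegree_iterate_derivative p k; omega),
    coeff_iterate_derivative, zero_add, Nat.descFactorial_self, nsmul_eq_mul]

namespace Lagrange

lemma interpolate_comp_eq_interpolate_image {F ι : Type*} [Field F] [DecidableEq F]
    [DecidableEq ι] {s : Finset ι} {v : ι → F} (hv : Set.InjOn v s) (f : F → F) :
    interpolate s v (f ∘ v) = interpolate (s.image v) id f := by
  refine eq_interpolate_of_eval_eq _ (injOn_id _) ?_ fun x hx => ?_
  · rw [Finset.card_image_of_injOn hv]
    exact degree_interpolate_lt _ hv
  · obtain ⟨i, hi, rfl⟩ := Finset.mem_image.1 hx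
    exact eval_interpolate_at_node _ hv hi

variable {S : Finset ℝ}

lemma eval_interpolate_id_of_mem (f : ℝ → ℝ) {x : ℝ} (hx : x ∈ S) :
    (interpolate S id f).eval x = f x :=
  eval_interpolate_at_node (v := id) f (injOn_id _) hx

lemma eval_nodal_id_of_mem {x : ℝ} (hx : x ∈ S) : (nodal S id).eval x = 0 :=
  eval_nodal_at_node (v := id) hx

lemma eval_nodal_id_ne_zero {x : ℝ} (hx : x ∉ S) : (nodal S id).eval x ≠ 0 :=
  eval_nodal_not_at_node fun y hy h => hx (by rw [h]; exact hy)

lemma abs_eval_nodal_le {a b u : ℝ} (hS : ↑S ⊆ Icc a b) (hu : u ∈ Icc a b) :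
    |(nodal S id).eval u| ≤ (b - a) ^ S.card := by
  rw [eval_nodal, Finset.abs_prod, ← Finset.prod_const]
  refine Finset.prod_le_prod (fun _ _ => abs_nonneg _) fun x hx => ?_
  have hx := hS hx
  rw [id]
  exact abs_sub_le_iff.2 ⟨by linarith [hu.2, hx.1], by linarith [hu.1, hx.2]⟩

lemma eval_nodal_reflect {a b : ℝ} (hS : ∀ x ∈ S, a + b - x ∈ S) (u : ℝ) :
    (nodal S id).eval (a + b - u) = (-1) ^ S.card * (nodal S id).eval u := by
  rw [eval_nodal, eval_nodal, ← Finset.prod_const, ← Finset.prod_mul_distrib]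
  exact Finset.prod_nbij' (fun x => a + b - x) (fun x => a + b - x) hS hS
    (fun _ _ => by simp) (fun _ _ => by simp) fun _ _ => by simp only [id]; ring

lemma integral_eval_nodal_eq_zero {a b : ℝ} (hS : ∀ x ∈ S, a + b - x ∈ S) (hodd : Odd S.card) :
    ∫ t in a..b, (nodal S id).eval t = 0 := by
  have h := intervalIntegral.integral_comp_sub_left (fun t => (nodal S id).eval t) (a + b)
    (a := a) (b := b)
  simp only [eval_nodal_reflect hS, hodd.neg_one_pow, neg_one_mul, intervalIntegral.integral_neg,
    add_sub_cancel_right, add_sub_cancel_left] at h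
  linarith

end Lagrange

namespace HasDerivChain

variable {F : ℕ → ℝ → ℝ} {k : ℕ} {a b : ℝ}

/-- Cauchy's form of the Lagrange interpolation error. -/
theorem exists_sub_interpolate_eq (hF : HasDerivChain F (k + 1) a b) {S : Finset ℝ}
    (hS : ↑S ⊆ Icc a b) (hcard : S.card = k + 1) {t : ℝ} (ht : t ∈ Icc a b) :
    ∃ ξ ∈ Icc a b, F 0 t - (interpolate S id (F 0)).eval t =
      F (k + 1) ξ / (k + 1).factorial * (nodal S id).eval t := by
  set P := interpolate S id (F 0)
  have hP : ∀ x ∈ S, P.eval x = F 0 x := fun x hx => eval_interpolate_id_of_mem _ hx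
  by_cases htS : t ∈ S
  · exact ⟨t, ht, by rw [hP t htS, sub_self, eval_nodal_id_of_mem htS, mul_zero]⟩
  have hωt : (nodal S id).eval t ≠ 0 := eval_nodal_id_ne_zero htS
  set c := (F 0 t - P.eval t) / (nodal S id).eval t
  set q := P + C c * nodal S id
  -- `F 0 - q` vanishes at the `k + 2` points `insert t S`
  obtain ⟨ξ, hξ, hξ0⟩ := (hF.sub_iterate_derivative q).exists_eq_zero (S := insert t S)
    (by rw [Finset.coe_insert]; exact insert_subset ht hS)
    (by rw [Finset.card_insert_of_notMem htS, hcard]) (by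
      intro x hx
      rcases Finset.mem_insert.1 hx with rfl | hx
      · simp only [Function.iterate_zero_apply, q, eval_add, eval_mul, eval_C, c]
        field_simp
        ring
      · simp [q, hP x hx, eval_nodal_id_of_mem hx])
  have hPdeg : P.natDegree < k + 1 := by
    rcases eq_or_ne P 0 with h | h
    · simp [h]
    · exact (natDegree_lt_iff_degree_lt h).2 (hcard ▸ degree_interpolate_lt _ (injOn_id _))
  have hω : derivative^[k + 1] (nodal S id) = C ((k + 1).factorial : ℝ) := by
    have hdeg : (nodal S id).natDegree = k + 1 := by rw [natDegree_nodal, hcard]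
    rw [iterate_derivative_eq_C_of_natDegree_le hdeg.le, ← hdeg,
      (nodal_monic (s := S) (v := id)).coeff_natDegree, mul_one]
  have hq : derivative^[k + 1] q = C (c * (k + 1).factorial) := by
    rw [iterate_map_add, iterate_derivative_eq_zero hPdeg, iterate_derivative_C_mul, hω,
      zero_add, C_mul]
  simp only [hq, eval_C, sub_eq_zero] at hξ0
  refine ⟨ξ, hξ, ?_⟩
  rw [hξ0, mul_div_cancel_right₀ _ (by positivity), div_mul_cancel₀ _ hωt]

theorem abs_sub_interpolate_le (hF : HasDerivChain F (k + 1) a b) {M : ℝ}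
    (hM : ∀ x ∈ Icc a b, |F (k + 1) x| ≤ M) {S : Finset ℝ} (hS : ↑S ⊆ Icc a b)
    (hcard : S.card = k + 1) {t : ℝ} (ht : t ∈ Icc a b) :
    |F 0 t - (interpolate S id (F 0)).eval t| ≤
      M / (k + 1).factorial * |(nodal S id).eval t| := by
  obtain ⟨ξ, hξ, h⟩ := hF.exists_sub_interpolate_eq hS hcard ht
  rw [h, abs_mul, abs_div, abs_of_pos (by positivity : (0 : ℝ) < (k + 1).factorial)]
  gcongr
  exact hM ξ hξ

end HasDerivChain

/-- The divided difference `f[S, u]` (with junk value `0` when `u ∈ S`). -/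
noncomputable def divDiff (S : Finset ℝ) (f : ℝ → ℝ) (u : ℝ) : ℝ :=
  (f u - (interpolate S id f).eval u) / (nodal S id).eval u

section DividedDifference

variable {S : Finset ℝ} {f : ℝ → ℝ}

lemma sub_interpolate_eq_mul_divDiff (S : Finset ℝ) (f : ℝ → ℝ) (u : ℝ) :
    f u - (interpolate S id f).eval u = (nodal S id).eval u * divDiff S f u := by
  by_cases hu : u ∈ S
  · rw [eval_interpolate_id_of_mem _ hu, eval_nodal_id_of_mem hu, sub_self, zero_mul]
  · exact (mul_div_cancel₀ _ (eval_nodal_id_ne_zero hu)).symm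

/-- Newton's form of the interpolating polynomial. -/
lemma interpolate_insert {x : ℝ} (hx : x ∉ S) :
    interpolate (insert x S) id f = interpolate S id f + C (divDiff S f x) * nodal S id := by
  refine (eq_interpolate_of_eval_eq _ (injOn_id _) ?_ fun y hy => ?_).symm
  · rw [Finset.card_insert_of_notMem hx]
    refine (degree_add_le _ _).trans_lt (max_lt ?_ ?_)
    · exact (degree_interpolate_lt _ (injOn_id _)).trans (by norm_cast; omega)
    · rw [← smul_eq_C_mul]
      refine (degree_smul_le _ _).trans_lt ?_
      rw [degree_nodal]
      norm_cast
      omega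
  · rcases Finset.mem_insert.1 hy with rfl | hy
    · simp only [eval_add, eval_mul, eval_C, id]
      linarith [sub_interpolate_eq_mul_divDiff S f y]
    · simp only [eval_add, eval_mul, eval_C, id, eval_interpolate_id_of_mem _ hy,
        eval_nodal_id_of_mem hy, mul_zero, add_zero]

lemma divDiff_sub_divDiff {u u' : ℝ} (hu : u ∉ S) (hu' : u' ∉ S) :
    divDiff S f u - divDiff S f u' = (u - u') * divDiff (insert u' S) f u := by
  have hsub := sub_interpolate_eq_mul_divDiff S f u
  have hins := sub_interpolate_eq_mul_divDiff (insert u' S) f u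
  rw [interpolate_insert hu', nodal_insert_eq_nodal hu'] at hins
  simp only [eval_add, eval_mul, eval_C, eval_sub, eval_X, id] at hins
  apply mul_left_cancel₀ (eval_nodal_id_ne_zero hu)
  linear_combination hins - hsub

end DividedDifference

namespace HasDerivChain

variable {F : ℕ → ℝ → ℝ} {k : ℕ} {a b : ℝ} {S : Finset ℝ}

lemma abs_divDiff_le (hF : HasDerivChain F (k + 1) a b) {M : ℝ}
    (hM : ∀ x ∈ Icc a b, |F (k + 1) x| ≤ M) (hS : ↑S ⊆ Icc a b) (hcard : S.card = k + 1)
    {u : ℝ} (hu : u ∈ Icc a b) : |divDiff S (F 0) u| ≤ M / (k + 1).factorial := by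
  rcases eq_or_ne ((nodal S id).eval u) 0 with hω | hω
  · rw [divDiff, hω, div_zero, abs_zero]
    exact div_nonneg ((abs_nonneg _).trans (hM u hu)) (by positivity)
  · rw [divDiff, abs_div, div_le_iff₀ (abs_pos.2 hω)]
    exact hF.abs_sub_interpolate_le hM hS hcard hu

lemma abs_divDiff_sub_le (hF : HasDerivChain F (k + 2) a b) {M : ℝ}
    (hM : ∀ x ∈ Icc a b, |F (k + 2) x| ≤ M) (hS : ↑S ⊆ Icc a b) (hcard : S.card = k + 1)
    {u u' : ℝ} (hu : u ∈ Icc a b) (huS : u ∉ S) (hu' : u' ∈ Icc a b) (hu'S : u' ∉ S) :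
    |divDiff S (F 0) u - divDiff S (F 0) u'| ≤ M / (k + 2).factorial * |u - u'| := by
  rw [divDiff_sub_divDiff huS hu'S, abs_mul, mul_comm]
  gcongr
  exact hF.abs_divDiff_le hM (by rw [Finset.coe_insert]; exact insert_subset hu' hS)
    (by rw [Finset.card_insert_of_notMem hu'S, hcard]) hu

theorem abs_integral_mul_sub_interpolate_le (hab : a < b) (hF : HasDerivChain F (k + 2) a b)
    {M₁ M₂ : ℝ} (hM₁ : ∀ x ∈ Icc a b, |F (k + 1) x| ≤ M₁)
    (hM₂ : ∀ x ∈ Icc a b, |F (k + 2) x| ≤ M₂) (hS : ↑S ⊆ Icc a b) (hcard : S.card = k + 1)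
    (hω : ∫ t in a..b, (nodal S id).eval t = 0) {g : ℝ → ℝ} {B : ℝ} {L : NNReal}
    (hgB : ∀ x ∈ Icc a b, |g x| ≤ B) (hgL : LipschitzOnWith L g (Icc a b)) :
    |∫ t in a..b, g t * (F 0 t - (interpolate S id (F 0)).eval t)| ≤
      (B * M₂ / (k + 2).factorial + L * M₁ / (k + 1).factorial) * (b - a) ^ (k + 3) := by
  set P := interpolate S id (F 0)
  set ω := nodal S id
  set d := divDiff S (F 0)
  set Λ := B * M₂ / (k + 2).factorial + L * M₁ / (k + 1).factorial
  have ha : a ∈ Icc a b := left_mem_Icc.2 hab.le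
  have hM₁0 : 0 ≤ M₁ := (abs_nonneg _).trans (hM₁ a ha)
  have hM₂0 : 0 ≤ M₂ := (abs_nonneg _).trans (hM₂ a ha)
  have hB0 : 0 ≤ B := (abs_nonneg _).trans (hgB a ha)
  obtain ⟨t₀, ht₀, ht₀S⟩ := (Icc_infinite hab).exists_notMem_finset S
  -- subtracting `g t₀ f[S, t₀] ω`, which integrates to zero, leaves an `O((b-a)^(k+2))` integrand
  have hd : ∀ u ∈ Icc a b, u ∉ S → |g u * d u - g t₀ * d t₀| ≤ Λ * (b - a) := by
    intro u hu huS
    have hdist : |u - t₀| ≤ b - a :=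
      abs_sub_le_iff.2 ⟨by linarith [hu.2, ht₀.1], by linarith [hu.1, ht₀.2]⟩
    have hg : |g u - g t₀| ≤ L * (b - a) := by
      have := hgL.dist_le_mul u hu t₀ ht₀
      rw [Real.dist_eq, Real.dist_eq] at this
      exact this.trans (by gcongr)
    calc |g u * d u - g t₀ * d t₀| = |g u * (d u - d t₀) + (g u - g t₀) * d t₀| := by ring_nf
      _ ≤ |g u| * |d u - d t₀| + |g u - g t₀| * |d t₀| := by
        rw [← abs_mul, ← abs_mul]; exact abs_add_le _ _
      _ ≤ B * (M₂ / (k + 2).factorial * (b - a)) + L * (b - a) * (M₁ / (k + 1).factorial) := by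
        gcongr
        · exact hgB u hu
        · exact (hF.abs_divDiff_sub_le hM₂ hS hcard hu huS ht₀ ht₀S).trans (by gcongr)
        · exact (hF.mono (by omega) le_rfl).abs_divDiff_le hM₁ hS hcard ht₀
      _ = Λ * (b - a) := by ring
  have hpt : ∀ u ∈ uIoc a b, ‖g u * (F 0 u - P.eval u) - g t₀ * d t₀ * ω.eval u‖ ≤
      (b - a) ^ (k + 1) * (Λ * (b - a)) := by
    intro u hu
    have hu : u ∈ Icc a b := Ioc_subset_Icc_self (uIoc_of_le hab.le ▸ hu)
    rw [sub_interpolate_eq_mul_divDiff, Real.norm_eq_abs,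
      show g u * (ω.eval u * d u) - g t₀ * d t₀ * ω.eval u = ω.eval u * (g u * d u - g t₀ * d t₀)
        by ring, abs_mul]
    by_cases huS : u ∈ S
    · rw [eval_nodal_id_of_mem huS, abs_zero, zero_mul]
      positivity
    · exact mul_le_mul (hcard ▸ abs_eval_nodal_le hS hu) (hd u hu huS) (abs_nonneg _)
        (by positivity)
  have hcont : ContinuousOn (fun u => g u * (F 0 u - P.eval u)) (uIcc a b) := by
    rw [uIcc_of_le hab.le]
    exact hgL.continuousOn.mul ((hF.continuousOn (by omega)).sub (Polynomial.continuousOn _))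
  have hsplit : ∫ t in a..b, g t * (F 0 t - P.eval t) =
      ∫ t in a..b, (g t * (F 0 t - P.eval t) - g t₀ * d t₀ * ω.eval t) := by
    rw [intervalIntegral.integral_sub hcont.intervalIntegrable
      (((Polynomial.continuous ω).const_mul (g t₀ * d t₀)).intervalIntegrable _ _),
      intervalIntegral.integral_const_mul, hω, mul_zero, sub_zero]
  rw [hsplit, ← Real.norm_eq_abs]
  refine (intervalIntegral.norm_integral_le_of_norm_le_const hpt).trans (le_of_eq ?_)
  rw [abs_of_pos (sub_pos.2 hab)]
  ring

end HasDerivChain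

section Nodes

variable {n r k : ℕ}

noncomputable def nodeSet (n r j : ℕ) : Finset ℝ :=
  (Finset.range (2 * r + 1)).image (tau n r j)

lemma tau_strictMono (hn : 0 < n) (hr : 0 < r) (j : ℕ) : StrictMono (tau n r j) := by
  intro a b hab
  unfold tau
  gcongr

lemma card_nodeSet (hn : 0 < n) (hr : 0 < r) (j : ℕ) : (nodeSet n r j).card = 2 * r + 1 := by
  rw [nodeSet, Finset.card_image_of_injective _ (tau_strictMono hn hr j).injective,
    Finset.card_range]

lemma interpPoly_eq_interpolate_nodeSet (hn : 0 < n) (hr : 0 < r) (j : ℕ) (f : ℝ → ℝ) :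
    interpPoly n r j f = interpolate (nodeSet n r j) id f :=
  interpolate_comp_eq_interpolate_image (tau_strictMono hn hr j).injective.injOn f

-- Pieces are indexed from `0`: `[k / n, (k + 1) / n]` is `Δ_(k+1)`, with nodes
-- `nodeSet n r (k + 1)`.
lemma tau_succ_eq (n r k i : ℕ) : tau n r (k + 1) i = k / n + i / (2 * r * n) := by
  simp [tau]

lemma nodeSet_subset (hn : 0 < n) (hr : 0 < r) :
    ↑(nodeSet n r (k + 1)) ⊆ Icc (k / n : ℝ) ((k + 1) / n) := by
  intro x hx
  obtain ⟨i, hi, rfl⟩ := Finset.mem_image.1 hx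
  have hi : (i : ℝ) ≤ 2 * r := by simp at hi; exact_mod_cast hi
  rw [tau_succ_eq]
  have : (i : ℝ) / (2 * r * n) ≤ 1 / n := by
    rw [div_le_div_iff₀ (by positivity) (by positivity)]
    nlinarith [(by positivity : (0 : ℝ) < n)]
  constructor
  · linarith [(by positivity : (0 : ℝ) ≤ i / (2 * r * n))]
  · linarith [(by ring : (k / n : ℝ) + 1 / n = (k + 1) / n)]

lemma add_sub_mem_nodeSet (hn : 0 < n) (hr : 0 < r) {x : ℝ} (hx : x ∈ nodeSet n r (k + 1)) :
    (k / n : ℝ) + (k + 1) / n - x ∈ nodeSet n r (k + 1) := by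
  obtain ⟨i, hi, rfl⟩ := Finset.mem_image.1 hx
  have hi : i ≤ 2 * r := by simp at hi; omega
  refine Finset.mem_image.2 ⟨2 * r - i, by simp, ?_⟩
  rw [tau_succ_eq, tau_succ_eq, Nat.cast_sub hi]
  field_simp
  push_cast
  ring

lemma Icc_piece_subset (hk : k < n) : Icc (k / n : ℝ) ((k + 1) / n) ⊆ Icc 0 1 := by
  have hn : (0 : ℝ) < n := by exact_mod_cast k.zero_le.trans_lt hk
  have hk : (k : ℝ) + 1 ≤ n := by exact_mod_cast hk
  refine Icc_subset_Icc (by positivity) ?_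
  rwa [div_le_one (by positivity)]

lemma exists_mem_Icc_piece (hn : 0 < n) {t : ℝ} (ht : t ∈ Icc (0 : ℝ) 1) :
    ∃ k < n, t ∈ Icc (k / n : ℝ) ((k + 1) / n) := by
  have hn' : (0 : ℝ) < n := by exact_mod_cast hn
  have htn : 0 ≤ t * n := mul_nonneg ht.1 hn'.le
  refine ⟨min ⌊t * n⌋₊ (n - 1), by omega, ?_, ?_⟩
  · rw [div_le_iff₀ hn']
    exact (Nat.cast_le.2 (min_le_left _ _)).trans (Nat.floor_le htn)
  · rw [le_div_iff₀ hn']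
    rcases le_total ⌊t * n⌋₊ (n - 1) with h | h
    · rw [min_eq_left h]
      exact (Nat.lt_floor_add_one _).le
    · rw [min_eq_right h, Nat.cast_sub hn, Nat.cast_one, sub_add_cancel]
      simpa using mul_le_mul_of_nonneg_right ht.2 hn'.le

lemma eqOn_Qn (hn : 0 < n) (hr : 0 < r) (hk : k < n) (f : ℝ → ℝ) :
    EqOn (Qn n r f) (fun t => (interpolate (nodeSet n r (k + 1)) id f).eval t)
      (Icc (k / n : ℝ) ((k + 1) / n)) := by
  intro t ht
  have hn' : (0 : ℝ) < n := by exact_mod_cast hn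
  have htn : 0 ≤ t * n := mul_nonneg (Icc_piece_subset hk ht).1 hn'.le
  rw [Qn, interpPoly_eq_interpolate_nodeSet hn hr]
  rcases ht.2.lt_or_eq with hlt | rfl
  · have hfloor : ⌊t * n⌋₊ = k := by
      rw [Nat.floor_eq_iff htn, ← div_le_iff₀ hn', ← lt_div_iff₀ hn']
      exact ⟨ht.1, hlt⟩
    rw [hfloor, min_eq_right hk]
  · have hfloor : ⌊((k : ℝ) + 1) / n * n⌋₊ = k + 1 := by
      rw [div_mul_cancel₀ _ hn'.ne', ← Nat.cast_succ, Nat.floor_natCast]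
    rw [hfloor]
    rcases (Nat.succ_le_of_lt hk).lt_or_eq with hk | hk
    · -- at the right endpoint `Q_n` uses the next piece, whose first node is `(k + 1) / n` too
      have hnext : ((k : ℝ) + 1) / n ∈ nodeSet n r (k + 1 + 1) :=
        Finset.mem_image.2 ⟨0, by simp, by rw [tau_succ_eq]; push_cast; ring⟩
      have hlast : ((k : ℝ) + 1) / n ∈ nodeSet n r (k + 1) := by
        refine Finset.mem_image.2 ⟨2 * r, by simp, ?_⟩
        rw [tau_succ_eq]
        field_simp
        push_cast
        ring
      rw [min_eq_right hk, eval_interpolate_id_of_mem _ hnext]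
      exact (eval_interpolate_id_of_mem _ hlast).symm
    · rw [min_eq_left (by omega), ← hk]

lemma measurable_Qn (n r : ℕ) (f : ℝ → ℝ) : Measurable (Qn n r f) := by
  have hpoly : Measurable fun p : ℝ × ℕ => (interpPoly n r p.2 f).eval p.1 :=
    measurable_from_prod_countable_left fun j => (interpPoly n r j f).continuous.measurable
  have hidx : Measurable fun t : ℝ => min n (⌊t * n⌋₊ + 1) :=
    (measurable_from_nat (f := fun m => min n (m + 1))).comp
      (measurable_id.mul_const (n : ℝ)).nat_floor
  exact hpoly.comp (measurable_id.prodMk hidx)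

end Nodes

namespace HasDerivChain

variable {F : ℕ → ℝ → ℝ} {n r : ℕ}

theorem abs_sub_Qn_le (hn : 0 < n) (hr : 0 < r) (hF : HasDerivChain F (2 * r + 1) 0 1) {M : ℝ}
    (hM : ∀ x ∈ Icc (0 : ℝ) 1, |F (2 * r + 1) x| ≤ M) {t : ℝ} (ht : t ∈ Icc (0 : ℝ) 1) :
    |F 0 t - Qn n r (F 0) t| ≤ M / (2 * r + 1).factorial * (1 / n : ℝ) ^ (2 * r + 1) := by
  obtain ⟨k, hk, htk⟩ := exists_mem_Icc_piece hn ht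
  have hsub := Icc_piece_subset hk
  have hM0 : 0 ≤ M := (abs_nonneg _).trans (hM t ht)
  rw [eqOn_Qn hn hr hk _ htk]
  refine ((hF.mono le_rfl hsub).abs_sub_interpolate_le (fun x hx => hM x (hsub hx))
    (nodeSet_subset hn hr) (card_nodeSet hn hr _) htk).trans ?_
  gcongr
  refine (abs_eval_nodal_le (nodeSet_subset hn hr) htk).trans (le_of_eq ?_)
  rw [card_nodeSet hn hr]
  ring

variable {M₁ M₂ B : ℝ} {L : NNReal} {g : ℝ → ℝ}

theorem abs_integral_mul_sub_Qn_piece_le (hn : 0 < n) (hr : 0 < r)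
    (hF : HasDerivChain F (2 * r + 2) 0 1) (hM₁ : ∀ x ∈ Icc (0 : ℝ) 1, |F (2 * r + 1) x| ≤ M₁)
    (hM₂ : ∀ x ∈ Icc (0 : ℝ) 1, |F (2 * r + 2) x| ≤ M₂) (hgB : ∀ x ∈ Icc (0 : ℝ) 1, |g x| ≤ B)
    (hgL : LipschitzOnWith L g (Icc 0 1)) {k : ℕ} (hk : k < n) :
    |∫ t in (k / n : ℝ)..((k + 1) / n), g t * (F 0 t - Qn n r (F 0) t)| ≤
      (B * M₂ / (2 * r + 2).factorial + L * M₁ / (2 * r + 1).factorial) *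
        (1 / n : ℝ) ^ (2 * r + 3) := by
  have hlt : (k / n : ℝ) < (k + 1) / n := by gcongr; linarith
  have hsub := Icc_piece_subset hk
  have hodd : Odd (nodeSet n r (k + 1)).card := by
    rw [card_nodeSet hn hr]; exact odd_two_mul_add_one r
  rw [intervalIntegral.integral_congr
    (g := fun t => g t * (F 0 t - (interpolate (nodeSet n r (k + 1)) id (F 0)).eval t))
    fun t ht => by rw [uIcc_of_le hlt.le] at ht; simp only [eqOn_Qn hn hr hk _ ht]]
  refine ((hF.mono le_rfl hsub).abs_integral_mul_sub_interpolate_le hlt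
    (fun x hx => hM₁ x (hsub hx)) (fun x hx => hM₂ x (hsub hx)) (nodeSet_subset hn hr)
    (card_nodeSet hn hr _) (integral_eval_nodal_eq_zero (fun x => add_sub_mem_nodeSet hn hr) hodd)
    (fun x hx => hgB x (hsub hx)) (hgL.mono hsub)).trans (le_of_eq ?_)
  ring

theorem abs_integral_mul_sub_Qn_le (hn : 0 < n) (hr : 0 < r)
    (hF : HasDerivChain F (2 * r + 2) 0 1) (hM₁ : ∀ x ∈ Icc (0 : ℝ) 1, |F (2 * r + 1) x| ≤ M₁)
    (hM₂ : ∀ x ∈ Icc (0 : ℝ) 1, |F (2 * r + 2) x| ≤ M₂) (hgB : ∀ x ∈ Icc (0 : ℝ) 1, |g x| ≤ B)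
    (hgL : LipschitzOnWith L g (Icc 0 1)) :
    |∫ t in (0 : ℝ)..1, g t * (F 0 t - Qn n r (F 0) t)| ≤
      (B * M₂ / (2 * r + 2).factorial + L * M₁ / (2 * r + 1).factorial) *
        (1 / n : ℝ) ^ (2 * r + 2) := by
  have hn' : (0 : ℝ) < n := by exact_mod_cast hn
  have hint : ∀ k < n, IntervalIntegrable (fun t => g t * (F 0 t - Qn n r (F 0) t)) volume
      (k / n : ℝ) ((k + 1 : ℕ) / n) := by
    intro k hk
    have hsub := Icc_piece_subset hk
    rw [Nat.cast_succ, intervalIntegrable_iff_integrableOn_Icc_of_le (by gcongr; linarith)]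
    refine (((hgL.continuousOn.mul ((hF.continuousOn (i := 0) (by omega)).sub
      (interpolate (nodeSet n r (k + 1)) id (F 0)).continuousOn)).mono hsub).integrableOn_Icc
      ).congr_fun (fun t ht => ?_) measurableSet_Icc
    simp only [Pi.mul_apply, Pi.sub_apply, eqOn_Qn hn hr hk _ ht]
  have hsum := intervalIntegral.sum_integral_adjacent_intervals hint
  simp only [Nat.cast_zero, zero_div, div_self hn'.ne', Nat.cast_succ] at hsum
  rw [← hsum]
  refine (Finset.abs_sum_le_sum_abs _ _).trans ((Finset.sum_le_sum fun k hk =>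
    hF.abs_integral_mul_sub_Qn_piece_le hn hr hM₁ hM₂ hgB hgL (Finset.mem_range.1 hk)).trans
    (le_of_eq ?_))
  rw [Finset.sum_const, Finset.card_range, nsmul_eq_mul, pow_succ]
  field_simp

end HasDerivChain

section KernelIntegral

variable {C B : ℝ} {ϕ : ℝ → ℝ}

lemma mem_Icc_of_mem_uIoc {t : ℝ} (ht : t ∈ uIoc (0 : ℝ) 1) : t ∈ Icc (0 : ℝ) 1 := by
  rw [uIoc_of_le zero_le_one] at ht
  exact Ioc_subset_Icc_self ht

lemma norm_mul_le_of_mem_uIoc {g : ℝ → ℝ} (hg : ∀ t ∈ Icc (0 : ℝ) 1, |g t| ≤ C)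
    (hϕ : ∀ t ∈ Icc (0 : ℝ) 1, |ϕ t| ≤ B) {t : ℝ} (ht : t ∈ uIoc (0 : ℝ) 1) :
    ‖g t * ϕ t‖ ≤ C * B := by
  have ht := mem_Icc_of_mem_uIoc ht
  rw [Real.norm_eq_abs, abs_mul]
  exact mul_le_mul (hg t ht) (hϕ t ht) (abs_nonneg _) ((abs_nonneg _).trans (hg t ht))

lemma abs_integral_mul_le {g : ℝ → ℝ} (hg : ∀ t ∈ Icc (0 : ℝ) 1, |g t| ≤ C)
    (hϕ : ∀ t ∈ Icc (0 : ℝ) 1, |ϕ t| ≤ B) : |∫ t in (0 : ℝ)..1, g t * ϕ t| ≤ C * B := by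
  simpa using intervalIntegral.norm_integral_le_of_norm_le_const
    fun t ht => norm_mul_le_of_mem_uIoc hg hϕ ht

theorem hasDerivChain_integral_mul {k : ℕ → ℝ → ℝ → ℝ} {m : ℕ}
    (hderiv : ∀ α < m, ∀ t ∈ Icc (0 : ℝ) 1, ∀ s ∈ Icc (0 : ℝ) 1,
      HasDerivWithinAt (fun u => k α u t) (k (α + 1) s t) (Icc 0 1) s)
    (hcont : ∀ α ≤ m, ∀ s ∈ Icc (0 : ℝ) 1, ContinuousOn (k α s) (Icc 0 1))
    (hbd : ∀ α ≤ m, ∀ s ∈ Icc (0 : ℝ) 1, ∀ t ∈ Icc (0 : ℝ) 1, |k α s t| ≤ C)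
    (hϕm : AEStronglyMeasurable ϕ (volume.restrict (Ioc 0 1)))
    (hϕ : ∀ t ∈ Icc (0 : ℝ) 1, |ϕ t| ≤ B) :
    HasDerivChain (fun α s => ∫ t in (0 : ℝ)..1, k α s t * ϕ t) m 0 1 := by
  have hmeas : ∀ α ≤ m, ∀ s ∈ Icc (0 : ℝ) 1,
      AEStronglyMeasurable (fun t => k α s t * ϕ t) (volume.restrict (uIoc 0 1)) := by
    intro α hα s hs
    rw [uIoc_of_le zero_le_one]
    exact (((hcont α hα s hs).mono Ioc_subset_Icc_self).aestronglyMeasurable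
      measurableSet_Ioc).mul hϕm
  have hbound : ∀ α ≤ m, ∀ s ∈ Icc (0 : ℝ) 1, ∀ t ∈ uIoc (0 : ℝ) 1, ‖k α s t * ϕ t‖ ≤ C * B :=
    fun α hα s hs t => norm_mul_le_of_mem_uIoc (hbd α hα s hs) hϕ
  intro α hα
  constructor
  · intro s hs
    refine intervalIntegral.continuousWithinAt_of_dominated_interval (bound := fun _ => C * B)
      (eventually_nhdsWithin_of_forall fun s' hs' => hmeas α hα.le s' hs')
      (eventually_nhdsWithin_of_forall fun s' hs' => ae_of_all _ (hbound α hα.le s' hs'))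
      intervalIntegrable_const (ae_of_all _ fun t ht => ?_)
    have ht := mem_Icc_of_mem_uIoc ht
    exact (hderiv α hα t ht s hs).continuousWithinAt.mul continuousWithinAt_const
  · intro s hs
    obtain ⟨ε, hε, hball⟩ := Metric.isOpen_iff.1 isOpen_Ioo s hs
    have hIcc : Icc (0 : ℝ) 1 ∈ nhds s := Icc_mem_nhds hs.1 hs.2
    refine (intervalIntegral.hasDerivAt_integral_of_dominated_loc_of_deriv_le
      (bound := fun _ => C * B) (Metric.ball_mem_nhds s hε)
      (Filter.eventually_of_mem hIcc fun s' hs' => hmeas α hα.le s' hs')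
      (intervalIntegrable_const.mono_fun' (hmeas α hα.le s (mem_of_mem_nhds hIcc))
        (ae_restrict_of_forall_mem measurableSet_uIoc (hbound α hα.le s (mem_of_mem_nhds hIcc))))
      (hmeas (α + 1) hα s (mem_of_mem_nhds hIcc))
      (ae_of_all _ fun t ht x hx => hbound (α + 1) hα x (Ioo_subset_Icc_self (hball hx)) t ht)
      intervalIntegrable_const (ae_of_all _ fun t ht x hx => ?_)).2
    have ht := mem_Icc_of_mem_uIoc ht
    have hx := hball hx
    exact ((hderiv α hα t ht x (Ioo_subset_Icc_self hx)).hasDerivAt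
      (Icc_mem_nhds hx.1 hx.2)).mul_const (ϕ t)

end KernelIntegral

/-- `κd α β = ∂^(α+β) κ / ∂s^α ∂t^β` on `[0, 1]²` for `α + β ≤ m`, all bounded by `C`. -/
def IsSmoothKernel (κd : ℕ → ℕ → ℝ → ℝ → ℝ) (m : ℕ) (C : ℝ) : Prop :=
  (∀ α β : ℕ, α + β + 1 ≤ m → ∀ t ∈ Icc (0 : ℝ) 1, ∀ s ∈ Icc (0 : ℝ) 1,
      HasDerivWithinAt (fun u => κd α β u t) (κd (α + 1) β s t) (Icc 0 1) s) ∧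
    (∀ α β : ℕ, α + β + 1 ≤ m → ∀ s ∈ Icc (0 : ℝ) 1, ∀ t ∈ Icc (0 : ℝ) 1,
      HasDerivWithinAt (fun u => κd α β s u) (κd α (β + 1) s t) (Icc 0 1) t) ∧
    (∀ α β : ℕ, α + β ≤ m → ∀ s ∈ Icc (0 : ℝ) 1, ∀ t ∈ Icc (0 : ℝ) 1, |κd α β s t| ≤ C)

namespace IsSmoothKernel

variable {κd : ℕ → ℕ → ℝ → ℝ → ℝ} {m : ℕ} {C B : ℝ} {ϕ : ℝ → ℝ}

lemma abs_le (hκ : IsSmoothKernel κd m C) {α : ℕ} (hα : α ≤ m) {s : ℝ}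
    (hs : s ∈ Icc (0 : ℝ) 1) : ∀ t ∈ Icc (0 : ℝ) 1, |κd α 0 s t| ≤ C :=
  hκ.2.2 α 0 hα s hs

lemma hasDerivChain_integral (hκ : IsSmoothKernel κd (m + 1) C)
    (hϕm : AEStronglyMeasurable ϕ (volume.restrict (Ioc 0 1)))
    (hϕ : ∀ t ∈ Icc (0 : ℝ) 1, |ϕ t| ≤ B) :
    HasDerivChain (fun α s => ∫ t in (0 : ℝ)..1, κd α 0 s t * ϕ t) m 0 1 :=
  hasDerivChain_integral_mul (fun α hα => hκ.1 α 0 (by omega))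
    (fun α hα s hs t ht => (hκ.2.1 α 0 (by omega) s hs t ht).continuousWithinAt)
    (fun α hα s hs => hκ.abs_le (by omega) hs) hϕm hϕ

lemma lipschitzOnWith (hκ : IsSmoothKernel κd m C) {α : ℕ} (hα : α + 2 ≤ m) {s : ℝ}
    (hs : s ∈ Icc (0 : ℝ) 1) : LipschitzOnWith C.toNNReal (κd α 0 s) (Icc 0 1) :=
  (convex_Icc 0 1).lipschitzOnWith_of_nnnorm_hasDerivWithin_le
    (fun t ht => hκ.2.1 α 0 (by omega) s hs t ht) fun t ht => by
      rw [← NNReal.coe_le_coe, coe_nnnorm, Real.coe_toNNReal', Real.norm_eq_abs]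
      exact (hκ.2.2 α 1 (by omega) s hs t ht).trans (le_max_left _ _)

end IsSmoothKernel

lemma abs_le_supNorm {f : ℝ → ℝ} (hf : ContinuousOn f (Icc 0 1)) {t : ℝ}
    (ht : t ∈ Icc (0 : ℝ) 1) : |f t| ≤ supNorm f := by
  obtain ⟨c, hc⟩ := isCompact_Icc.bddAbove_image hf.abs
  exact le_ciSup (f := fun t : Icc (0 : ℝ) 1 => |f t|)
    ⟨c, by rintro _ ⟨u, rfl⟩; exact hc (mem_image_of_mem _ u.2)⟩ ⟨t, ht⟩

lemma supNorm_le {f : ℝ → ℝ} {c : ℝ} (h : ∀ t ∈ Icc (0 : ℝ) 1, |f t| ≤ c) : supNorm f ≤ c :=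
  haveI : Nonempty (Icc (0 : ℝ) 1) := ⟨⟨0, left_mem_Icc.2 zero_le_one⟩⟩
  ciSup_le fun t => h t t.2

theorem stmt_16_general (r : ℕ) (hr : 1 ≤ r)
    (κ : ℝ → ℝ → ℝ) (κd : ℕ → ℕ → ℝ → ℝ → ℝ) (C₂ : ℝ) (hC₂ : 0 < C₂)
    (hκ0 : κd 0 0 = κ)
    (hds : ∀ α β : ℕ, α + β + 1 ≤ 2 * r + 3 → ∀ t ∈ Set.Icc (0:ℝ) 1, ∀ s ∈ Set.Icc (0:ℝ) 1,
      HasDerivWithinAt (fun u => κd α β u t) (κd (α + 1) β s t) (Set.Icc 0 1) s)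
    (hdt : ∀ α β : ℕ, α + β + 1 ≤ 2 * r + 3 → ∀ s ∈ Set.Icc (0:ℝ) 1, ∀ t ∈ Set.Icc (0:ℝ) 1,
      HasDerivWithinAt (fun u => κd α β s u) (κd α (β + 1) s t) (Set.Icc 0 1) t)
    (hbd : ∀ α β : ℕ, α + β ≤ 2 * r + 3 →
      ∀ s ∈ Set.Icc (0:ℝ) 1, ∀ t ∈ Set.Icc (0:ℝ) 1, |κd α β s t| ≤ C₂)
    :
    ∃ C : ℝ, 0 < C ∧
      ∀ n : ℕ, 1 ≤ n → ∀ ψ : ℝ → ℝ, ContinuousOn ψ (Set.Icc 0 1) →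
        supNorm (fun t =>
            Kop κ (fun u => Kop κ ψ u - Qn n r (Kop κ ψ) u) t -
              Qn n r (Kop κ (fun u => Kop κ ψ u - Qn n r (Kop κ ψ) u)) t) ≤
          C * supNorm ψ * ((1 : ℝ) / n) ^ (4 * r + 3) := by
  subst hκ0
  have hκ : IsSmoothKernel κd (2 * r + 3) C₂ := ⟨hds, hdt, hbd⟩
  refine ⟨C₂ ^ 2 * (1 / (2 * r + 2).factorial + 1 / (2 * r + 1).factorial) /
    (2 * r + 1).factorial, by positivity, fun n hn ψ hψ => ?_⟩
  have hψ_le : ∀ t ∈ Icc (0 : ℝ) 1, |ψ t| ≤ supNorm ψ := fun t ht => abs_le_supNorm hψ ht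
  have hX := hκ.hasDerivChain_integral
    ((hψ.mono Ioc_subset_Icc_self).aestronglyMeasurable measurableSet_Ioc) hψ_le
  set X := fun α s => ∫ t in (0 : ℝ)..1, κd α 0 s t * ψ t
  have hX_le : ∀ α ≤ 2 * r + 2, ∀ s ∈ Icc (0 : ℝ) 1, |X α s| ≤ C₂ * supNorm ψ :=
    fun α hα s hs => abs_integral_mul_le (hκ.abs_le (by omega) hs) hψ_le
  have he_meas : AEStronglyMeasurable (fun t => X 0 t - Qn n r (X 0) t)
      (volume.restrict (Ioc 0 1)) :=
    (((hX.continuousOn (by omega)).mono Ioc_subset_Icc_self).aestronglyMeasurable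
      measurableSet_Ioc).sub (measurable_Qn n r _).aestronglyMeasurable
  have hZ := hκ.hasDerivChain_integral he_meas fun t ht =>
    (hX.mono (by omega) le_rfl).abs_sub_Qn_le hn hr (hX_le _ (by omega)) ht
  have hZ_le : ∀ s ∈ Icc (0 : ℝ) 1,
      |∫ t in (0 : ℝ)..1, κd (2 * r + 1) 0 s t * (X 0 t - Qn n r (X 0) t)| ≤
        (C₂ * (C₂ * supNorm ψ) / (2 * r + 2).factorial +
          C₂ * (C₂ * supNorm ψ) / (2 * r + 1).factorial) * (1 / n : ℝ) ^ (2 * r + 2) :=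
    fun s hs => by
      simpa only [Real.coe_toNNReal _ hC₂.le] using hX.abs_integral_mul_sub_Qn_le hn hr
        (hX_le _ (by omega)) (hX_le _ le_rfl) (hκ.abs_le (by omega) hs)
        (hκ.lipschitzOnWith (by omega) hs)
  refine supNorm_le fun t ht =>
    ((hZ.mono (by omega) le_rfl).abs_sub_Qn_le hn hr hZ_le ht).trans (le_of_eq ?_)
  rw [show 4 * r + 3 = (2 * r + 2) + (2 * r + 1) by ring, pow_add]
  ring

/-- Lemma 5, first estimate: with `x := Kψ` and `z := K(x − Q_n x)`, `‖z − Q_n z‖_∞ ≤ C ‖ψ‖_∞ h^{4r+3}` with `C` independent of `n`. -/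
theorem stmt_16 (r : ℕ) (hr : 1 ≤ r)
    (κ : ℝ → ℝ → ℝ) (κd : ℕ → ℕ → ℝ → ℝ → ℝ) (C₂ : ℝ) (hC₂ : 0 < C₂)
    (hκ0 : κd 0 0 = κ)
    (hds : ∀ α β : ℕ, α + β + 1 ≤ 2 * r + 3 → ∀ t ∈ Set.Icc (0:ℝ) 1, ∀ s ∈ Set.Icc (0:ℝ) 1,
      HasDerivWithinAt (fun u => κd α β u t) (κd (α + 1) β s t) (Set.Icc 0 1) s)
    (hdt : ∀ α β : ℕ, α + β + 1 ≤ 2 * r + 3 → ∀ s ∈ Set.Icc (0:ℝ) 1, ∀ t ∈ Set.Icc (0:ℝ) 1,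
      HasDerivWithinAt (fun u => κd α β s u) (κd α (β + 1) s t) (Set.Icc 0 1) t)
    (hcont : ∀ α β : ℕ, α + β ≤ 2 * r + 3 →
      ContinuousOn (fun q : ℝ × ℝ => κd α β q.1 q.2) (Set.Icc 0 1 ×ˢ Set.Icc 0 1))
    (hbd : ∀ α β : ℕ, α + β ≤ 2 * r + 3 →
      ∀ s ∈ Set.Icc (0:ℝ) 1, ∀ t ∈ Set.Icc (0:ℝ) 1, |κd α β s t| ≤ C₂)
    :
    ∃ C : ℝ, 0 < C ∧
      ∀ n : ℕ, 1 ≤ n → ∀ ψ : ℝ → ℝ, ContinuousOn ψ (Set.Icc 0 1) →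
        supNorm (fun t =>
            Kop κ (fun u => Kop κ ψ u - Qn n r (Kop κ ψ) u) t -
              Qn n r (Kop κ (fun u => Kop κ ψ u - Qn n r (Kop κ ψ) u)) t) ≤
          C * supNorm ψ * ((1 : ℝ) / n) ^ (4 * r + 3) :=
  stmt_16_general r hr κ κd C₂ hC₂ hκ0 hds hdt hbd
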